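/- arXiv:0706.1936 — 2 statements merged into one kernel-verified Lean document; each statement's English description precedes it below -/
import Mathlib

section
/- Let μ be a positive measure on the closure of a rooted tree T and let σ(α) = ρ(α)^{1−p'} μ(S̄(α))^{p'} where S̄(α) is the closure of the successor set of α. If the tree condition Σ_{β ≥ α} σ(β) ≤ C·μ(S̄(α)) holds for all α ∈ T, then the maximal operator Mg(α) = max_{o ≤ β ≤ α} (1/μ(S̄(α))) ∫_{S̄(β)} g dμ is of weak type (1,1) from L¹(μ) to L^{1,∞}(T, σ): σ({α : Mg(α) > λ}) ≤ C λ^{-1} ∫ g dμ for all g ≥ 0 and λ > 0. -/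
/-!
Stopping time argument. The averages over the shadows `S̄(β)` that exceed `λ` have minimal
elements `β`; these are pairwise incomparable, so their shadows are disjoint, and every `α`
with `Mg(α) > λ` lies above one of them. The tree condition bounds the `σ`-mass above each
stopping vertex `β` by `C μ(S̄(β)) ≤ C λ⁻¹ ∫_{S̄(β)} g dμ`, and disjointness lets the integrals
add up to at most `∫ g dμ`.
-/

open MeasureTheory ENNReal Function

noncomputable def shadowAverage {T Ω : Type*} [MeasurableSpace Ω] (μ : Measure Ω)
    (S : T → Set Ω) (g : Ω → ℝ≥0∞) (β : T) : ℝ≥0∞ :=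
  (∫⁻ x in S β, g x ∂μ) / μ (S β)

noncomputable def treeMaximal {T Ω : Type*} [Preorder T] [MeasurableSpace Ω] (μ : Measure Ω)
    (S : T → Set Ω) (g : Ω → ℝ≥0∞) (α : T) : ℝ≥0∞ :=
  ⨆ β ∈ Set.Iic α, shadowAverage μ S g β

theorem ENNReal.le_inv_mul_of_lt_div {a b c : ℝ≥0∞} (ha₀ : a ≠ 0) (ha : a ≠ ⊤) (h : a < b / c) :
    c ≤ a⁻¹ * b := by
  rw [← ENNReal.div_eq_inv_mul, ENNReal.le_div_iff_mul_le (.inl ha₀) (.inl ha)]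
  exact mul_le_of_le_div' h.le

theorem setOf_exists_le_subset_biUnion_minimal {T : Type*} [PartialOrder T] [WellFoundedLT T]
    (P : T → Prop) : {α | ∃ β ≤ α, P β} ⊆ ⋃ β ∈ {β | Minimal P β}, Set.Ici β := by
  rintro α ⟨β, hβα, hβ⟩
  obtain ⟨γ, hγβ, hγ⟩ := exists_minimal_le_of_wellFoundedLT P β hβ
  exact Set.mem_biUnion hγ (hγβ.trans hβα)

theorem tsum_setLIntegral_le_lintegral {ι Ω : Type*} [MeasurableSpace Ω] (μ : Measure Ω)
    {s : ι → Set Ω} (hs : ∀ i, MeasurableSet (s i)) (hd : Pairwise (Disjoint on s))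
    (g : Ω → ℝ≥0∞) : ∑' i, ∫⁻ x in s i, g x ∂μ ≤ ∫⁻ x, g x ∂μ := by
  calc ∑' i, ∫⁻ x in s i, g x ∂μ = ∑' i, μ.withDensity g (s i) := by
        simp_rw [withDensity_apply g (hs _)]
    _ ≤ μ.withDensity g Set.univ :=
        (tsum_meas_le_meas_iUnion_of_disjoint _ hs hd).trans (measure_mono (Set.subset_univ _))
    _ = ∫⁻ x, g x ∂μ := by rw [withDensity_apply g .univ, setLIntegral_univ]

theorem tsum_setOf_lt_treeMaximal_le {T Ω : Type*} [PartialOrder T] [WellFoundedLT T]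
    [MeasurableSpace Ω] (μ : Measure Ω) {S : T → Set Ω} (hS : ∀ α, MeasurableSet (S α))
    (hS_disj : ∀ α β, ¬ α ≤ β → ¬ β ≤ α → S α ∩ S β = ∅) {σ : T → ℝ≥0∞} {C : ℝ≥0∞}
    (htc : ∀ α, ∑' β : Set.Ici α, σ β ≤ C * μ (S α)) (g : Ω → ℝ≥0∞) {lam : ℝ≥0∞}
    (hlam₀ : lam ≠ 0) (hlam : lam ≠ ⊤) :
    ∑' α : {α | lam < treeMaximal μ S g α}, σ α ≤ C * lam⁻¹ * ∫⁻ x, g x ∂μ := by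
  set B := {β | Minimal (fun β ↦ lam < shadowAverage μ S g β) β}
  have hcover : {α | lam < treeMaximal μ S g α} ⊆ ⋃ β ∈ B, Set.Ici β := by
    refine subset_trans (fun α hα ↦ ?_) (setOf_exists_le_subset_biUnion_minimal _)
    simpa [treeMaximal, lt_iSup_iff] using hα
  have hB_disj : Pairwise (Disjoint on fun β : B ↦ S β) := fun β γ hne ↦
    Set.disjoint_iff_inter_eq_empty.2 <| hS_disj β γ
      ((setOfPred_minimal_antichain _) β.2 γ.2 (Subtype.coe_ne_coe.2 hne))
      ((setOfPred_minimal_antichain _) γ.2 β.2 (Subtype.coe_ne_coe.2 hne.symm))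
  calc ∑' α : {α | lam < treeMaximal μ S g α}, σ α
      ≤ ∑' α : ⋃ β ∈ B, Set.Ici β, σ α := ENNReal.tsum_mono_subtype σ hcover
    _ ≤ ∑' β : B, ∑' α : Set.Ici β.1, σ α := ENNReal.tsum_biUnion_le_tsum σ B _
    _ ≤ ∑' β : B, C * (lam⁻¹ * ∫⁻ x in S β, g x ∂μ) := ENNReal.tsum_le_tsum fun β ↦
        (htc β).trans (mul_le_mul_right (ENNReal.le_inv_mul_of_lt_div hlam₀ hlam β.2.1) C)
    _ = C * lam⁻¹ * ∑' β : B, ∫⁻ x in S β, g x ∂μ := by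
        rw [ENNReal.tsum_mul_left, ENNReal.tsum_mul_left, mul_assoc]
    _ ≤ C * lam⁻¹ * ∫⁻ x, g x ∂μ := by
        gcongr
        exact tsum_setLIntegral_le_lintegral μ (s := fun β : B ↦ S β) (fun β ↦ hS β) hB_disj g

theorem stmt3_general {T Ω : Type*} [PartialOrder T] [WellFoundedLT T] [MeasurableSpace Ω]
    (μ : Measure Ω) (Sbar : T → Set Ω) (hmeas : ∀ α, MeasurableSet (Sbar α))
    (hdisj : ∀ α β : T, ¬ α ≤ β → ¬ β ≤ α → Sbar α ∩ Sbar β = ∅)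
    (p' : ℝ) (ρ : T → ℝ≥0∞) (C : ℝ≥0∞)
    (htc : ∀ α : T,
      ∑' β : {β : T // α ≤ β}, ρ β.1 ^ (1 - p') * μ (Sbar β.1) ^ p' ≤ C * μ (Sbar α)) :
    ∀ g : Ω → ℝ≥0∞, Measurable g → ∀ lam : ℝ≥0∞, 0 < lam → lam ≠ ⊤ →
      ∑' α : {α : T |
          lam < ⨆ β ∈ Set.Iic α, (∫⁻ x in Sbar β, g x ∂μ) / μ (Sbar β)},
        ρ α.1 ^ (1 - p') * μ (Sbar α.1) ^ p'
      ≤ C * lam⁻¹ * ∫⁻ x, g x ∂μ :=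
  fun g _ _ hlam₀ hlam ↦
    tsum_setOf_lt_treeMaximal_le (σ := fun α ↦ ρ α ^ (1 - p') * μ (Sbar α) ^ p') μ hmeas hdisj
      htc g hlam₀.ne' hlam

/-- Weak type (1,1) for the tree maximal function under the tree condition.
`T` is a rooted tree (root = `⊥`, tree order: any two elements below a common
element are comparable), `Ω` plays the role of the closure `T̄` of the tree,
and `Sbar α ⊆ Ω` is the closure of the successor set (shadow) of `α`.
`σ(α) = ρ(α)^(1−p') μ(S̄(α))^(p')`. If the tree condition
`Σ_{β ≥ α} σ(β) ≤ C μ(S̄(α))` holds, then for every `g ≥ 0` and `λ > 0`,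
`σ({α : Mg(α) > λ}) ≤ C λ⁻¹ ∫ g dμ`, where
`Mg(α) = max_{⊥ ≤ β ≤ α} (1/μ(S̄(β))) ∫_{S̄(β)} g dμ`. -/
theorem stmt3 {T Ω : Type*} [PartialOrder T] [OrderBot T] [Countable T]
    [WellFoundedLT T] [MeasurableSpace Ω] (μ : Measure Ω) (Sbar : T → Set Ω)
    (hmeas : ∀ α, MeasurableSet (Sbar α))
    (hanti : ∀ α β : T, α ≤ β → Sbar β ⊆ Sbar α)
    (hdisj : ∀ α β : T, ¬ α ≤ β → ¬ β ≤ α → Sbar α ∩ Sbar β = ∅)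
    (hpos : ∀ α, 0 < μ (Sbar α))
    (p p' : ℝ) (hp : 1 < p) (hp' : p' = p / (p - 1))
    (ρ : T → ℝ≥0∞) (hρ : ∀ α, ρ α ≠ 0 ∧ ρ α ≠ ⊤)
    (C : ℝ≥0∞) (hC : C ≠ ⊤)
    (htc : ∀ α : T,
      ∑' β : {β : T // α ≤ β}, ρ β.1 ^ (1 - p') * μ (Sbar β.1) ^ p' ≤ C * μ (Sbar α)) :
    ∀ g : Ω → ℝ≥0∞, Measurable g → ∀ lam : ℝ≥0∞, 0 < lam → lam ≠ ⊤ →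
      ∑' α : {α : T |
          lam < ⨆ β ∈ Set.Iic α, (∫⁻ x in Sbar β, g x ∂μ) / μ (Sbar β)},
        ρ α.1 ^ (1 - p') * μ (Sbar α.1) ^ p'
      ≤ C * lam⁻¹ * ∫⁻ x, g x ∂μ :=
  stmt3_general μ Sbar hmeas hdisj p' ρ C htc
end

section
/- (Discrete Hardy inequality on the tree under the tree condition, p = 2 unweighted case) Let T be a rooted dyadic tree and μ a finitely supported positive measure on T. If Σ_{β ≥ α} μ(S(β))² ≤ C μ(S(α)) for all α ∈ T (where S(α) = {β : β ≥ α} and μ(S(α)) = Σ_{β ≥ α} μ(β)), then Σ_{α∈T} (Iφ(α))² μ(α) ≤ C' Σ_{α∈T} φ(α)² for all φ : T → [0,∞), with C' depending only on C. -/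
/-!
Expanding the square along the chain from the root gives `(Iφ)² ≤ 2 Σ_{β ≤ α} φ(β) Iφ(β)`, so
by Fubini `A := Σ (Iφ)² μ ≤ 2 Σ_β φ(β) · Iφ(β) μ(S(β))`. AM-GM with weight `t = C + 1` bounds
this by `t² Σ φ² + Σ (Iφ)² μ(S)²`. Since `Iφ²` is nondecreasing along the tree, it is a sum of
nonnegative increments over the chain; Fubini and the tree condition
`Σ_{β ≥ α} μ(S(β))² ≤ C μ(S(α))` then give `Σ (Iφ)² μ(S)² ≤ C A`. Hence `(C + 1) A ≤ (C + 1)² Σ φ² + C A`, and `A < ∞` (μ is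
finitely supported) lets us cancel `C A`.
-/

open ENNReal

/-- The discrete Hardy operator on the dyadic tree of finite binary strings
(root `[]`, order: `α ≤ β` iff `α` is a suffix of `β`):
`Iφ(α) = Σ_{o ≤ β ≤ α} φ(β)`. -/
noncomputable def treeHardy (φ : List Bool → ℝ≥0∞) (α : List Bool) : ℝ≥0∞ :=
  (α.tails.map φ).sum

/-- `μ(S(α)) = Σ_{β ≥ α} μ(β)`, the measure of the shadow of `α`. -/
noncomputable def shadowMass (μ : List Bool → ℝ≥0∞) (α : List Bool) : ℝ≥0∞ :=
  ∑' β : {β : List Bool // α <:+ β}, μ β.1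

lemma List.nodup_tails {ι : Type*} (l : List ι) : l.tails.Nodup := by
  induction l with
  | nil => simp
  | cons a l ih =>
    refine List.nodup_cons.2 ⟨fun h => ?_, ih⟩
    simpa using ((List.mem_tails _ _).1 h).length_le

lemma List.sum_map_tails_eq_tsum {ι : Type*} (g : List ι → ℝ≥0∞) (l : List ι) :
    (l.tails.map g).sum = ∑' m, {m | m <:+ l}.indicator g m := by
  classical
  have hsuffix : {m | m <:+ l} = ↑l.tails.toFinset := by
    ext m
    simp [List.mem_tails]
  rw [hsuffix, ← List.sum_toFinset g l.nodup_tails, sum_eq_tsum_indicator]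

lemma tsum_sum_tails_mul_eq_tsum_mul_shadowMass (g μ : List Bool → ℝ≥0∞) :
    ∑' α, (α.tails.map g).sum * μ α = ∑' β, g β * shadowMass μ β := by
  have hswap (α β : List Bool) :
      {β | β <:+ α}.indicator g β * μ α = g β * {α | β <:+ α}.indicator μ α := by
    by_cases h : β <:+ α <;> simp [h]
  simp_rw [List.sum_map_tails_eq_tsum, ← ENNReal.tsum_mul_right, hswap]
  rw [ENNReal.tsum_comm]
  simp_rw [ENNReal.tsum_mul_left, shadowMass, ← tsum_subtype]
  rfl

noncomputable def treeIncrement (f : List Bool → ℝ≥0∞) : List Bool → ℝ≥0∞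
  | [] => f []
  | b :: β => f (b :: β) - f β

lemma sum_tails_treeIncrement {f : List Bool → ℝ≥0∞} (hf : ∀ b β, f β ≤ f (b :: β))
    (α : List Bool) : (α.tails.map (treeIncrement f)).sum = f α := by
  induction α with
  | nil => simp [treeIncrement]
  | cons b β ih =>
    rw [List.tails_cons, List.map_cons, List.sum_cons, ih]
    exact tsub_add_cancel_of_le (hf b β)

lemma tsum_mul_le_of_shadowMass_le {f μ ν : List Bool → ℝ≥0∞} {C : ℝ≥0∞}
    (hf : ∀ b β, f β ≤ f (b :: β)) (hνμ : ∀ α, shadowMass ν α ≤ C * shadowMass μ α) :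
    ∑' α, f α * ν α ≤ C * ∑' α, f α * μ α := by
  simp_rw [← sum_tails_treeIncrement hf, tsum_sum_tails_mul_eq_tsum_mul_shadowMass,
    ← ENNReal.tsum_mul_left]
  refine ENNReal.tsum_le_tsum fun β => ?_
  grw [hνμ β, mul_left_comm]

@[simp]
lemma treeHardy_nil (φ : List Bool → ℝ≥0∞) : treeHardy φ [] = φ [] := by
  simp [treeHardy]

@[simp]
lemma treeHardy_cons (φ : List Bool → ℝ≥0∞) (b : Bool) (β : List Bool) :
    treeHardy φ (b :: β) = φ (b :: β) + treeHardy φ β := by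
  simp [treeHardy]

lemma treeHardy_le_cons (φ : List Bool → ℝ≥0∞) (b : Bool) (β : List Bool) :
    treeHardy φ β ≤ treeHardy φ (b :: β) := by
  simp

lemma treeHardy_ne_top {φ : List Bool → ℝ≥0∞} (hφ : ∀ β, φ β ≠ ∞) (α : List Bool) :
    treeHardy φ α ≠ ∞ := by
  induction α with
  | nil => simpa using hφ []
  | cons b β ih => simpa using ⟨hφ _, ih⟩

lemma sq_treeHardy_le (φ : List Bool → ℝ≥0∞) (α : List Bool) :
    treeHardy φ α ^ 2 ≤ 2 * (α.tails.map fun β => φ β * treeHardy φ β).sum := by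
  induction α with
  | nil => simpa [sq] using le_mul_of_one_le_left' one_le_two
  | cons b β ih =>
    set a := φ (b :: β)
    have ha : a ^ 2 ≤ 2 * a ^ 2 := le_mul_of_one_le_left' one_le_two
    calc treeHardy φ (b :: β) ^ 2 = a ^ 2 + 2 * a * treeHardy φ β + treeHardy φ β ^ 2 := by
          rw [treeHardy_cons, add_sq]
      _ ≤ 2 * a ^ 2 + 2 * a * treeHardy φ β
            + 2 * (β.tails.map fun γ => φ γ * treeHardy φ γ).sum := by grw [ha, ih]
      _ = _ := by simp only [List.tails_cons, List.map_cons, List.sum_cons, treeHardy_cons]; ring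

lemma tsum_sq_treeHardy_mul_le (φ μ : List Bool → ℝ≥0∞) :
    ∑' α, treeHardy φ α ^ 2 * μ α ≤ 2 * ∑' β, φ β * treeHardy φ β * shadowMass μ β := by
  rw [← tsum_sum_tails_mul_eq_tsum_mul_shadowMass, ← ENNReal.tsum_mul_left]
  refine ENNReal.tsum_le_tsum fun α => ?_
  grw [sq_treeHardy_le, mul_assoc]

lemma ENNReal.two_mul_le_add_sq (a b : ℝ≥0∞) : 2 * a * b ≤ a ^ 2 + b ^ 2 := by
  induction a using ENNReal.recTopCoe with
  | top => simp
  | coe a =>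
    induction b using ENNReal.recTopCoe with
    | top => simp
    | coe b => exact_mod_cast _root_.two_mul_le_add_sq a b

lemma mul_tsum_sq_treeHardy_mul_le {φ μ : List Bool → ℝ≥0∞} {C : ℝ≥0∞}
    (htree : ∀ α, shadowMass (fun β => shadowMass μ β ^ 2) α ≤ C * shadowMass μ α)
    (t : ℝ≥0∞) :
    t * ∑' α, treeHardy φ α ^ 2 * μ α
      ≤ t ^ 2 * ∑' α, φ α ^ 2 + C * ∑' α, treeHardy φ α ^ 2 * μ α := by
  have henergy : ∑' β, treeHardy φ β ^ 2 * shadowMass μ β ^ 2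
      ≤ C * ∑' α, treeHardy φ α ^ 2 * μ α :=
    tsum_mul_le_of_shadowMass_le (fun b β => by grw [treeHardy_le_cons φ b β]) htree
  calc t * ∑' α, treeHardy φ α ^ 2 * μ α
      ≤ t * (2 * ∑' β, φ β * treeHardy φ β * shadowMass μ β) := by
        grw [tsum_sq_treeHardy_mul_le]
    _ = ∑' β, 2 * (t * φ β) * (treeHardy φ β * shadowMass μ β) := by
        rw [← ENNReal.tsum_mul_left, ← ENNReal.tsum_mul_left]
        exact tsum_congr fun β => by ring
    _ ≤ ∑' β, ((t * φ β) ^ 2 + (treeHardy φ β * shadowMass μ β) ^ 2) :=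
        ENNReal.tsum_le_tsum fun β => ENNReal.two_mul_le_add_sq _ _
    _ = t ^ 2 * ∑' α, φ α ^ 2 + ∑' β, treeHardy φ β ^ 2 * shadowMass μ β ^ 2 := by
        simp_rw [mul_pow]
        rw [ENNReal.tsum_add, ENNReal.tsum_mul_left]
    _ ≤ t ^ 2 * ∑' α, φ α ^ 2 + C * ∑' α, treeHardy φ α ^ 2 * μ α := by
        grw [henergy]

lemma tsum_sq_treeHardy_mul_ne_top {φ μ : List Bool → ℝ≥0∞} (hμ : (Function.support μ).Finite)
    (hμ_top : ∀ α, μ α ≠ ∞) (hφ : ∀ β, φ β ≠ ∞) :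
    ∑' α, treeHardy φ α ^ 2 * μ α ≠ ∞ := by
  rw [tsum_eq_sum' (s := hμ.toFinset) (by simp)]
  exact ENNReal.sum_ne_top.2 fun α _ =>
    mul_ne_top (pow_ne_top (treeHardy_ne_top hφ α)) (hμ_top α)

/-- Discrete Hardy inequality on the dyadic tree under the tree condition
(`p = 2`, unweighted): if `μ` is a finitely supported positive measure on the
tree with `Σ_{β ≥ α} μ(S(β))² ≤ C μ(S(α))` for all `α`, then
`Σ_α (Iφ(α))² μ(α) ≤ C' Σ_α φ(α)²` for all `φ ≥ 0`, with `C'` depending only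
on `C`. -/
theorem stmt18 (C : ℝ≥0∞) (hC : C ≠ ⊤) :
    ∃ C' : ℝ≥0∞, C' ≠ ⊤ ∧
      ∀ μ : List Bool → ℝ≥0∞, (Function.support μ).Finite → (∀ α, μ α ≠ ⊤) →
        (∀ α : List Bool,
          ∑' β : {β : List Bool // α <:+ β}, (shadowMass μ β.1) ^ 2
            ≤ C * shadowMass μ α) →
        ∀ φ : List Bool → ℝ≥0∞,
          ∑' α : List Bool, (treeHardy φ α) ^ 2 * μ α
            ≤ C' * ∑' α : List Bool, (φ α) ^ 2 := by
  refine ⟨(C + 1) ^ 2, pow_ne_top (add_ne_top.2 ⟨hC, one_ne_top⟩), ?_⟩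
  intro μ hμ hμ_top htree φ
  by_cases hB : ∑' α, φ α ^ 2 = ∞
  · simp [hB]
  have hφ (β : List Bool) : φ β ≠ ∞ := by
    simpa using ENNReal.ne_top_of_tsum_ne_top hB β
  have hA := tsum_sq_treeHardy_mul_ne_top hμ hμ_top hφ
  have key := mul_tsum_sq_treeHardy_mul_le (φ := φ) htree (C + 1)
  rw [add_mul, one_mul, add_comm _ (C * _)] at key
  exact ENNReal.le_of_add_le_add_left (mul_ne_top hC hA) key
end
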